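/- arXiv:1801.08407 — 2 statements merged into one kernel-verified Lean document; each statement's English description precedes it below -/
import Mathlib

section
/- Assume η ≥ 2, δT < 0, η divides δT and q ≤ δX + δT/η. Let k ∈ ℕ and r ∈ {1,…,q−1} be such that δ/η = k(q−1)+r. Then the polynomial F0 = X1^{−δT/η}·X2^{δ/η} − T1^{ηk(q−1)}·X1^{k(q−1)−δT/η}·X2^r + T1^{(ηk−1)(q−1)}·T2^{q−1}·X1^{k(q−1)−δT/η}·X2^r − T2^{ηk(q−1)}·X1^{k(q−1)−δT/η}·X2^r belongs to R(δT,δX) and vanishes at every 𝔽_q-rational point of H_η, i.e. ev_{(δT,δX)}(F0) = 0. -/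
open MvPolynomial

attribute [local instance] Classical.propDecidable

namespace Hirz

/-- Index type for the `(q+1)²` rational points of the Hirzebruch surface. -/
abbrev HIdx (F : Type) := (F × F) ⊕ F ⊕ F ⊕ Unit

variable (F : Type) [Field F] [Fintype F]

/-- The homogeneous coordinates of the rational points of `H_η`. -/
def pt : HIdx F → Fin 4 → F
  | Sum.inl (a, b) => ![1, a, 1, b]
  | Sum.inr (Sum.inl b) => ![0, 1, 1, b]
  | Sum.inr (Sum.inr (Sum.inl a)) => ![1, a, 0, 1]
  | Sum.inr (Sum.inr (Sum.inr _)) => ![0, 1, 0, 1]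

/-- Evaluation of a polynomial at all the rational points. -/
noncomputable def ev (P : MvPolynomial (Fin 4) F) : HIdx F → F :=
  fun i => eval (pt F i) P

/-- `c` is the exponent vector (T1,T2,X1,X2) of a monomial of bidegree `(δT, δX)`. -/
def IsBideg (η : ℕ) (δT : ℤ) (δX : ℕ) (c : Fin 4 → ℕ) : Prop :=
  (c 0 : ℤ) + (c 1 : ℤ) - (η : ℤ) * (c 2 : ℤ) = δT ∧ c 2 + c 3 = δX

/-- The monomial with exponent vector `c`. -/
noncomputable def mon (c : Fin 4 → ℕ) : MvPolynomial (Fin 4) F :=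
  monomial (Finsupp.equivFunOnFinite.symm c) (1 : F)

/-- The set of monomials of bidegree `(δT, δX)`. -/
def MSet (η : ℕ) (δT : ℤ) (δX : ℕ) : Set (MvPolynomial (Fin 4) F) :=
  {P | ∃ c : Fin 4 → ℕ, IsBideg η δT δX c ∧ P = mon F c}

/-- `R(δT,δX)`, the space of homogeneous polynomials of bidegree `(δT,δX)`. -/
noncomputable def RSpan (η : ℕ) (δT : ℤ) (δX : ℕ) : Submodule F (MvPolynomial (Fin 4) F) :=
  Submodule.span F (MSet F η δT δX)

/-- The code `C_η(δT,δX)`, image of `R(δT,δX)` under evaluation. -/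
noncomputable def Code (η : ℕ) (δT : ℤ) (δX : ℕ) : Submodule F (HIdx F → F) :=
  Submodule.span F (ev F '' MSet F η δT δX)

/-- Hamming weight. -/
noncomputable def wt (v : HIdx F → F) : ℕ := {i | v i ≠ 0}.ncard

/-- Minimum distance of `C_η(δT,δX)`. -/
noncomputable def dmin (η : ℕ) (δT : ℤ) (δX : ℕ) : ℕ :=
  sInf {w : ℕ | ∃ v ∈ Code F η δT δX, v ≠ 0 ∧ wt F v = w}

/-- `⌊A⌋` where `A = δX` if `δT ≥ 0` and `A = δ/η` otherwise. -/
def Afloor (η : ℕ) (δT : ℤ) (δX : ℕ) : ℤ :=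
  if 0 ≤ δT then (δX : ℤ) else (δT + (η : ℤ) * (δX : ℤ)) / (η : ℤ)

/-- Exponent vector of the monomial `M(d2,c2)`. -/
def Mexp (η : ℕ) (δT : ℤ) (δX : ℕ) (d2 c2 : ℕ) : Fin 4 → ℕ :=
  ![(δT + (η : ℤ) * ((δX : ℤ) - (d2 : ℤ)) - (c2 : ℤ)).toNat, c2, δX - d2, d2]

/-- The monomial `M(d2,c2) = T1^(δT+η(δX-d2)-c2) T2^c2 X1^(δX-d2) X2^d2`. -/
noncomputable def Mmon (η : ℕ) (δT : ℤ) (δX : ℕ) (d2 c2 : ℕ) : MvPolynomial (Fin 4) F :=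
  mon F (Mexp η δT δX d2 c2)

/-- The lattice polygon `P(δT,δX)`. -/
def PSet (η : ℕ) (δT : ℤ) (δX : ℕ) : Set (ℕ × ℕ) :=
  {p | (p.1 : ℤ) ≤ Afloor η δT δX ∧ (p.2 : ℤ) ≤ δT + (η : ℤ) * ((δX : ℤ) - (p.1 : ℤ))}

/-- The set `A_X = {α : α ≤ min(⌊A⌋, q-1)} ∪ ({A} ∩ ℕ)`. -/
def AX (η : ℕ) (δT : ℤ) (δX : ℕ) (q : ℕ) : Set ℕ :=
  {α | (α : ℤ) ≤ min (Afloor η δT δX) ((q : ℤ) - 1)} ∪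
    {α | if 0 ≤ δT then (α : ℤ) = (δX : ℤ)
         else (α : ℤ) * (η : ℤ) = δT + (η : ℤ) * (δX : ℤ)}

/-- The set of representatives `K(δT,δX)`. -/
def KSet (η : ℕ) (δT : ℤ) (δX : ℕ) (q : ℕ) : Set (ℕ × ℕ) :=
  {p | p.1 ∈ AX η δT δX q ∧
    ((p.2 : ℤ) ≤ min (δT + (η : ℤ) * (δX : ℤ) - (η : ℤ) * (p.1 : ℤ)) (q : ℤ) - 1 ∨
      (p.2 : ℤ) = δT + (η : ℤ) * (δX : ℤ) - (η : ℤ) * (p.1 : ℤ))}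

/-- Condition (H): `η ≥ 2`, `δT < 0`, `η ∣ δT` and `q ≤ δX + δT/η`. -/
def CondH (η : ℕ) (δT : ℤ) (δX : ℕ) (q : ℕ) : Prop :=
  2 ≤ η ∧ δT < 0 ∧ (η : ℤ) ∣ δT ∧ (q : ℤ) ≤ (δX : ℤ) + δT / (η : ℤ)

/-- `K*(δT,δX)`: `K(δT,δX)` minus `(δ/η, 0)` if (H) holds. -/
def KStar (η : ℕ) (δT : ℤ) (δX : ℕ) (q : ℕ) : Set (ℕ × ℕ) :=
  if CondH η δT δX q then
    KSet η δT δX q \ {(((δT + (η : ℤ) * (δX : ℤ)) / (η : ℤ)).toNat, 0)}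
  else KSet η δT δX q

/-- `Δ*(δT,δX) = {M(α,β) : (α,β) ∈ K*(δT,δX)}`. -/
noncomputable def DeltaStar (η : ℕ) (δT : ℤ) (δX : ℕ) (q : ℕ) :
    Set (MvPolynomial (Fin 4) F) :=
  {P | ∃ p ∈ KStar η δT δX q, P = Mmon F η δT δX p.1 p.2}

set_option linter.unusedSectionVars false in
lemma eval_mon (x : Fin 4 → F) (c : Fin 4 → ℕ) :
    eval x (mon F c) = x 0 ^ c 0 * x 1 ^ c 1 * x 2 ^ c 2 * x 3 ^ c 3 := by
  simp only [mon, eval_monomial, one_mul]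
  rw [Finsupp.prod_fintype _ _ (fun i => pow_zero _)]
  simp [Fin.prod_univ_four]

lemma mon_mem_RSpan (η : ℕ) (δT : ℤ) (δX : ℕ) (c : Fin 4 → ℕ)
    (h : IsBideg η δT δX c) : mon F c ∈ RSpan F η δT δX :=
  Submodule.subset_span ⟨c, h, rfl⟩

/-- under condition (H), the explicit four-term polynomial `F0` has
bidegree `(δT,δX)` and vanishes at every rational point of `H_η`. -/
theorem statement2 (η : ℕ) (δT : ℤ) (δX : ℕ)
    (hη : 2 ≤ η) (hT : δT < 0) (hdvd : (η : ℤ) ∣ δT)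
    (hδ : 0 ≤ δT + (η : ℤ) * (δX : ℤ))
    (hq : (Fintype.card F : ℤ) ≤ (δX : ℤ) + δT / (η : ℤ))
    (k r : ℕ) (hr1 : 1 ≤ r) (hr2 : r ≤ Fintype.card F - 1)
    (hkr : (δT + (η : ℤ) * (δX : ℤ)) / (η : ℤ) =
      (k : ℤ) * ((Fintype.card F : ℤ) - 1) + (r : ℤ)) :
    let q := Fintype.card F
    let e : ℕ := ((-δT) / (η : ℤ)).toNat
    let F0 : MvPolynomial (Fin 4) F :=
      mon F ![0, 0, e, ((δT + (η : ℤ) * (δX : ℤ)) / (η : ℤ)).toNat]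
        - mon F ![η * k * (q - 1), 0, k * (q - 1) + e, r]
        + mon F ![(η * k - 1) * (q - 1), q - 1, k * (q - 1) + e, r]
        - mon F ![0, η * k * (q - 1), k * (q - 1) + e, r]
    F0 ∈ RSpan F η δT δX ∧ ev F F0 = 0 := by
  intro q e F0
  have hq2 : 2 ≤ q := Fintype.one_lt_card
  obtain ⟨t, ht⟩ := hdvd
  have hηZ : (0:ℤ) < (η:ℤ) := by exact_mod_cast (by omega : 0 < η)
  have ht1 : t ≤ -1 := by nlinarith
  have heZ : (e : ℤ) = -t := by
    have h1 : (-δT) / (η:ℤ) = -t := by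
      rw [ht, ← mul_neg]; exact Int.mul_ediv_cancel_left _ (by omega)
    simp only [e, h1]
    exact Int.toNat_of_nonneg (by omega)
  have heη : (η:ℤ) * (e:ℤ) = -δT := by rw [heZ, ht]; ring
  have he1 : 1 ≤ e := by omega
  set Dn : ℕ := ((δT + (η : ℤ) * (δX : ℤ)) / (η : ℤ)).toNat with hDn
  have hDdiv : (δT + (η:ℤ)*(δX:ℤ))/(η:ℤ) = t + (δX:ℤ) := by
    rw [ht, ← mul_add]; exact Int.mul_ediv_cancel_left _ (by omega)
  have htδ : 0 ≤ t + (δX:ℤ) := by nlinarith [hδ]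
  have hDZ : (Dn : ℤ) = t + (δX:ℤ) := by
    rw [hDn, hDdiv]; exact Int.toNat_of_nonneg htδ
  have hkrZ : (Dn : ℤ) = (k:ℤ) * ((q:ℤ) - 1) + (r:ℤ) := by
    rw [hDZ, ← hDdiv]; exact hkr
  have hkrN : Dn = k * (q - 1) + r := by
    have hc : ((k * (q - 1) + r : ℕ) : ℤ) = (k:ℤ) * ((q:ℤ) - 1) + (r:ℤ) := by
      push_cast [Nat.cast_sub (by omega : 1 ≤ q)]; ring
    exact_mod_cast hkrZ.trans hc.symm
  have heD : Dn + e = δX := by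
    have : (Dn : ℤ) + (e : ℤ) = (δX : ℤ) := by rw [hDZ, heZ]; ring
    exact_mod_cast this
  have hqD : q ≤ Dn := by
    have hdt : δT / (η:ℤ) = t := by rw [ht]; exact Int.mul_ediv_cancel_left _ (by omega)
    have : (q:ℤ) ≤ (Dn:ℤ) := by rw [hDZ]; rw [hdt] at hq; linarith
    exact_mod_cast this
  have hk1 : 1 ≤ k := by
    rcases Nat.eq_zero_or_pos k with hk | hk
    · subst hk; simp at hkrN; omega
    · exact hk
  have hηk2 : 2 ≤ η * k := by calc 2 = 2 * 1 := by ring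
                                  _ ≤ η * k := Nat.mul_le_mul hη hk1
  have hηkq : 1 ≤ η * k * (q - 1) :=
    Nat.one_le_iff_ne_zero.mpr (Nat.mul_ne_zero (by omega) (by omega))
  have hηkq' : 1 ≤ (η * k - 1) * (q - 1) :=
    Nat.one_le_iff_ne_zero.mpr (Nat.mul_ne_zero (by omega) (by omega))
  have hKsum : ((η*k-1)*(q-1) : ℕ) + (q-1) = η*(k*(q-1)) := by
    rw [show η*(k*(q-1)) = (η*k)*(q-1) by ring]
    obtain ⟨m, hm⟩ : ∃ m, η*k = m+1 := ⟨η*k-1, by omega⟩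
    rw [hm, Nat.add_sub_cancel]
    ring
  constructor
  · refine Submodule.sub_mem _ (Submodule.add_mem _ (Submodule.sub_mem _ ?_ ?_) ?_) ?_ <;>
      refine mon_mem_RSpan F η δT δX _ ⟨?_, ?_⟩ <;>
      simp only [Matrix.cons_val_zero, Matrix.cons_val_one, Matrix.head_cons,
        Matrix.cons_val_two, Matrix.tail_cons, Matrix.cons_val_three, Matrix.head_fin_const,
        Nat.cast_zero, Nat.cast_add, Nat.cast_mul]
    · linear_combination -heη
    · omega
    · push_cast
      linear_combination -heη
    · omega
    · have hc : (((η*k-1)*(q-1) : ℕ) : ℤ) + ((q-1 : ℕ) : ℤ) = (η:ℤ) * ((k*(q-1) : ℕ) : ℤ) := by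
        exact_mod_cast congrArg (Nat.cast (R := ℤ)) hKsum
      push_cast at hc ⊢
      linear_combination hc - heη
    · omega
    · push_cast
      linear_combination -heη
    · omega
  · have hq' : ∀ a : F, a ≠ 0 → a ^ (q-1) = 1 := fun a ha =>
      FiniteField.pow_card_sub_one_eq_one a ha
    have hbD : ∀ b : F, b ^ Dn = b ^ r := by
      intro b
      rcases eq_or_ne b 0 with hb | hb
      · subst hb; rw [zero_pow (by omega), zero_pow (by omega)]
      · rw [hkrN, pow_add, pow_mul, hq' _ (pow_ne_zero _ hb), one_mul]
    have haQ : ∀ a : F, a ^ (η*k*(q-1)) = a ^ (q-1) := by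
      intro a
      rcases eq_or_ne a 0 with ha | ha
      · subst ha; rw [zero_pow (by omega), zero_pow (by omega)]
      · rw [show η*k*(q-1) = (q-1)*(η*k) by ring, pow_mul, hq' a ha, one_pow]
    funext i
    rcases i with ⟨a, b⟩ | b | a | u <;>
      simp only [F0, ev, pt, map_sub, map_add, eval_mon, Matrix.cons_val_zero,
        Matrix.cons_val_one, Matrix.head_cons, Matrix.cons_val_two, Matrix.tail_cons,
        Matrix.cons_val_three, pow_zero, one_pow, one_mul, mul_one, Pi.zero_apply]
    · rw [hbD b, haQ a]; ring
    · rw [hbD b, zero_pow (by omega : η*k*(q-1) ≠ 0),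
        zero_pow (by omega : (η*k-1)*(q-1) ≠ 0)]
      ring
    · rw [zero_pow (by omega : e ≠ 0), zero_pow (by omega : k*(q-1)+e ≠ 0)]
      ring
    · rw [zero_pow (by omega : e ≠ 0), zero_pow (by omega : k*(q-1)+e ≠ 0)]
      ring

end Hirz
end

section
/- Let η ≥ 2 and (δT,δX) ∈ ℤ×ℕ with δ := δT+η·δX ≥ 0. If q > δ, then the minimum distance of C_η(δT,δX) equals d_η(δT,δX) = (q + [δX = 0])·(q−δ+1), where [δX = 0] equals 1 if δX = 0 and 0 otherwise. -/
open MvPolynomial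

attribute [local instance] Classical.propDecidable

/-!
A point of `H_η` is a pair `(t, s)`: a point `t` of the `T`-line `ℙ¹` and a point `s` of the
fibre `ℙ¹` over it. Let `P ≠ 0` have bidegree `(δT, δX)` and let `e` be its largest `X₂`-degree.
Over `t`, `P` restricts to a binary form of degree `δX` in the fibre coordinates whose
`X₂ ^ e`-coefficient is the value at `t` of a binary form of degree `δ - η e`, the `X₂ ^ e`-part
of `P`. A nonzero binary form of degree `D` has at most `D` zeros on `ℙ¹`, so at least
`q + 1 - δ + η e` fibres carry a nonzero restriction, each with at least `q - e` nonzero points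
(`q + 1 - e` if `e = δX`); for `η ≥ 2` the product is at least `(q + [δX = 0]) (q - δ + 1)`.
The bound is attained by `X₁ ^ δX ∏_{a ∈ E} (T₂ - a T₁)` for any `δ`-element set `E ⊆ 𝔽_q`.
-/

namespace Hirz

open Finset

section

variable {F : Type} [Field F]

/-- Value at the point `(1 : b)` (for `some b`) or `(0 : 1)` (for `none`) of `ℙ¹` of the
degree-`D` homogenization of `p`. -/
def homogEval (p : Polynomial F) (D : ℕ) : Option F → F
  | some b => p.eval b
  | none => p.coeff D

lemma card_le_card_eval_ne_zero_add_natDegree [Fintype F] {p : Polynomial F} (hp : p ≠ 0) :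
    Fintype.card F ≤ #{a | p.eval a ≠ 0} + p.natDegree := by
  have hroots : #{a | p.eval a = 0} ≤ p.natDegree :=
    Polynomial.card_le_degree_of_subset_roots fun a ha =>
      (Polynomial.mem_roots hp).2 (Finset.mem_filter.1 ha).2
  have := Finset.card_filter_add_card_filter_not (s := univ) (p := fun a : F => p.eval a = 0)
  simp only [← ne_eq, Finset.card_univ] at this
  omega

lemma card_add_le_card_homogEval_ne_zero_add [Fintype F] {p : Polynomial F} (hp : p ≠ 0) {d D : ℕ}
    (hpd : p.natDegree ≤ d) :
    Fintype.card F + (if d = D then 1 else 0) ≤ #{s | homogEval p D s ≠ 0} + d := by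
  have hcard : #{s | homogEval p D s ≠ 0} =
      #{a | p.eval a ≠ 0} + if p.coeff D ≠ 0 then 1 else 0 := by
    rw [Finset.card_filter, Fintype.sum_option, Finset.card_filter, add_comm]
    rfl
  have hq := card_le_card_eval_ne_zero_add_natDegree hp
  rw [hcard]
  split_ifs with hdD hc hc <;> try omega
  have hlt : p.natDegree < D := lt_of_le_of_ne (by omega) fun h =>
    hc (h ▸ Polynomial.leadingCoeff_ne_zero.2 hp)
  omega

def p1Coords : Option F → F × F
  | some a => (1, a)
  | none => (0, 1)

def pointEquiv : Option F × Option F ≃ HIdx F where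
  toFun
    | (some a, some b) => Sum.inl (a, b)
    | (none, some b) => Sum.inr (Sum.inl b)
    | (some a, none) => Sum.inr (Sum.inr (Sum.inl a))
    | (none, none) => Sum.inr (Sum.inr (Sum.inr ()))
  invFun
    | Sum.inl (a, b) => (some a, some b)
    | Sum.inr (Sum.inl b) => (none, some b)
    | Sum.inr (Sum.inr (Sum.inl a)) => (some a, none)
    | Sum.inr (Sum.inr (Sum.inr ())) => (none, none)
  left_inv := by rintro ⟨_ | _, _ | _⟩ <;> rfl
  right_inv := by rintro (⟨_, _⟩ | _ | _ | ⟨⟩) <;> rfl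

lemma pt_pointEquiv (t s : Option F) :
    pt F (pointEquiv (t, s)) =
      ![(p1Coords t).1, (p1Coords t).2, (p1Coords s).1, (p1Coords s).2] := by
  rcases t with _ | _ <;> rcases s with _ | _ <;> rfl

lemma wt_eq_card [Fintype F] (v : HIdx F → F) : wt F v = #{x | v (pointEquiv x) ≠ 0} := by
  rw [wt, ← Set.ncard_preimage_of_injective_subset_range pointEquiv.injective (by simp),
    Set.ncard_eq_toFinset_card']
  simp

lemma wt_eq_sum_card_fiber [Fintype F] (v : HIdx F → F) :
    wt F v = ∑ t, #{s | v (pointEquiv (t, s)) ≠ 0} := by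
  rw [wt_eq_card, Finset.card_filter, Fintype.sum_prod_type]
  simp only [Finset.card_filter]

def bidegWeight (η : ℕ) : Fin 4 → ℤ × ℤ := ![(1, 0), (1, 0), (-η, 1), (0, 1)]

lemma isBideg_iff_weight_eq {η : ℕ} {δT : ℤ} {δX : ℕ} {d : Fin 4 →₀ ℕ} :
    IsBideg η δT δX d ↔ Finsupp.weight (bidegWeight η) d = (δT, (δX : ℤ)) := by
  rw [Finsupp.weight_apply, Finsupp.sum_fintype _ _ (by simp), Fin.sum_univ_four]
  simp only [bidegWeight, IsBideg, Prod.ext_iff, Fin.isValue, Matrix.cons_val_zero,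
    Matrix.cons_val_one, Matrix.cons_val, Prod.smul_mk, Int.nsmul_eq_mul, nsmul_zero, mul_one,
    mul_neg, Prod.mk_add_mk, add_zero, zero_add]
  exact and_congr ⟨fun h => by linarith, fun h => by linarith⟩ (by omega)

lemma RSpan_eq_weightedHomogeneousSubmodule (η : ℕ) (δT : ℤ) (δX : ℕ) :
    RSpan F η δT δX = weightedHomogeneousSubmodule F (bidegWeight η) (δT, δX) := by
  rw [weightedHomogeneousSubmodule_eq_finsupp_supported,
    AddMonoidAlgebra.supported_eq_span_single, RSpan]
  congr 1
  ext P
  simp only [MSet, mon, Set.mem_ofPred_eq, Set.mem_image]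
  constructor
  · rintro ⟨c, hc, rfl⟩
    exact ⟨_, isBideg_iff_weight_eq.1 hc, rfl⟩
  · rintro ⟨d, hd, rfl⟩
    exact ⟨d, isBideg_iff_weight_eq.2 hd, by simp [monomial]⟩

lemma mem_RSpan_iff {η : ℕ} {δT : ℤ} {δX : ℕ} {P : MvPolynomial (Fin 4) F} :
    P ∈ RSpan F η δT δX ↔ IsWeightedHomogeneous (bidegWeight η) P (δT, δX) := by
  rw [RSpan_eq_weightedHomogeneousSubmodule, mem_weightedHomogeneousSubmodule]

lemma isBideg_of_mem_support {η : ℕ} {δT : ℤ} {δX : ℕ} {P : MvPolynomial (Fin 4) F}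
    (hP : P ∈ RSpan F η δT δX) {d : Fin 4 →₀ ℕ} (hd : d ∈ P.support) : IsBideg η δT δX d :=
  isBideg_iff_weight_eq.2 (mem_RSpan_iff.1 hP (mem_support_iff.1 hd))

lemma IsBideg.add_add_mul_eq {η : ℕ} {δT : ℤ} {δX : ℕ} {c : Fin 4 → ℕ}
    (h : IsBideg η δT δX c) : (c 0 + c 1 + η * c 3 : ℤ) = δT + η * δX := by
  obtain ⟨hT, hX⟩ := h
  have hX' : (c 2 : ℤ) + c 3 = δX := by exact_mod_cast hX
  linear_combination hT + η * hX'

lemma IsBideg.ext {η : ℕ} {δT : ℤ} {δX : ℕ} {d d' : Fin 4 →₀ ℕ} (h : IsBideg η δT δX d)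
    (h' : IsBideg η δT δX d') (h1 : d 1 = d' 1) (h3 : d 3 = d' 3) : d = d' := by
  have h0 := h.add_add_mul_eq
  have h0' := h'.add_add_mul_eq
  rw [h1, h3] at h0
  have h2 := h.2
  have h2' := h'.2
  ext i
  fin_cases i <;> simp only [Fin.zero_eta, Fin.mk_one, Fin.reduceFinMk] <;> omega

noncomputable def evLinearMap : MvPolynomial (Fin 4) F →ₗ[F] HIdx F → F :=
  LinearMap.pi fun i => (aeval (pt F i)).toLinearMap

lemma mem_Code_iff {η : ℕ} {δT : ℤ} {δX : ℕ} {v : HIdx F → F} :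
    v ∈ Code F η δT δX ↔ ∃ P ∈ RSpan F η δT δX, ev F P = v := by
  have hev : ev F = evLinearMap := by
    ext P i
    rfl
  rw [Code, hev, ← Submodule.map_span, ← RSpan, Submodule.mem_map]

lemma ev_pointEquiv (P : MvPolynomial (Fin 4) F) (t s : Option F) :
    ev F P (pointEquiv (t, s)) = ∑ d ∈ P.support, coeff d P *
      ((p1Coords t).1 ^ d 0 * (p1Coords t).2 ^ d 1 *
        (p1Coords s).1 ^ d 2 * (p1Coords s).2 ^ d 3) := by
  rw [ev, pt_pointEquiv, eval_eq']
  simp only [Fin.prod_univ_four]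
  rfl

/-- The restriction of `P` to the fibre over `t`, in the affine coordinate of the fibre. -/
noncomputable def fiberPoly (P : MvPolynomial (Fin 4) F) (t : Option F) : Polynomial F :=
  ∑ d ∈ P.support, Polynomial.C (coeff d P * ((p1Coords t).1 ^ d 0 * (p1Coords t).2 ^ d 1)) *
    Polynomial.X ^ d 3

/-- The terms of `P` of `X₂`-degree `e`, dehomogenized in the `T`-variables. -/
noncomputable def topPoly (P : MvPolynomial (Fin 4) F) (e : ℕ) : Polynomial F :=
  ∑ d ∈ P.support with d 3 = e, Polynomial.C (coeff d P) * Polynomial.X ^ d 1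

lemma ev_pointEquiv_eq_homogEval {P : MvPolynomial (Fin 4) F} {δX : ℕ}
    (hP : ∀ d ∈ P.support, d 2 + d 3 = δX) (t s : Option F) :
    ev F P (pointEquiv (t, s)) = homogEval (fiberPoly P t) δX s := by
  rw [ev_pointEquiv, fiberPoly]
  cases s with
  | some b =>
    simp [homogEval, Polynomial.eval_finsetSum, p1Coords, mul_assoc]
  | none =>
    simp only [homogEval, Polynomial.finsetSum_coeff, Polynomial.coeff_C_mul_X_pow]
    refine Finset.sum_congr rfl fun d hd => ?_
    have := hP d hd
    by_cases h : d 2 = 0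
    · simp [p1Coords, h, show δX = d 3 by omega]
    · simp [p1Coords, h, show δX ≠ d 3 by omega]

lemma natDegree_fiberPoly_le {P : MvPolynomial (Fin 4) F} {e : ℕ}
    (hP : ∀ d ∈ P.support, d 3 ≤ e) (t : Option F) : (fiberPoly P t).natDegree ≤ e :=
  Polynomial.natDegree_sum_le_of_forall_le _ _ fun d hd =>
    (Polynomial.natDegree_C_mul_X_pow_le _ _).trans (hP d hd)

lemma coeff_fiberPoly_eq_homogEval {P : MvPolynomial (Fin 4) F} {e D : ℕ}
    (hP : ∀ d ∈ P.support, d 3 = e → d 0 + d 1 = D) (t : Option F) :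
    (fiberPoly P t).coeff e = homogEval (topPoly P e) D t := by
  rw [fiberPoly, topPoly, Polynomial.finsetSum_coeff]
  simp only [Polynomial.coeff_C_mul_X_pow]
  rw [← Finset.sum_filter]
  cases t with
  | some a => simp [homogEval, Polynomial.eval_finsetSum, p1Coords, eq_comm]
  | none =>
    simp only [homogEval, Polynomial.finsetSum_coeff, Polynomial.coeff_C_mul_X_pow]
    refine Finset.sum_congr (by simp [eq_comm]) fun d hd => ?_
    have := hP d (Finset.mem_filter.1 hd).1 (by simpa [eq_comm] using (Finset.mem_filter.1 hd).2)
    by_cases h : d 0 = 0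
    · simp [p1Coords, h, show D = d 1 by omega]
    · simp [p1Coords, h, show D ≠ d 1 by omega]

lemma natDegree_topPoly_le {P : MvPolynomial (Fin 4) F} {e D : ℕ}
    (hP : ∀ d ∈ P.support, d 3 = e → d 0 + d 1 = D) : (topPoly P e).natDegree ≤ D :=
  Polynomial.natDegree_sum_le_of_forall_le _ _ fun d hd =>
    (Polynomial.natDegree_C_mul_X_pow_le _ _).trans
      (by have := hP d (Finset.mem_filter.1 hd).1 (Finset.mem_filter.1 hd).2; omega)

lemma coeff_topPoly {η : ℕ} {δT : ℤ} {δX : ℕ} {P : MvPolynomial (Fin 4) F}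
    (hP : P ∈ RSpan F η δT δX) {d : Fin 4 →₀ ℕ} (hd : d ∈ P.support) :
    (topPoly P (d 3)).coeff (d 1) = coeff d P := by
  rw [topPoly, Polynomial.finsetSum_coeff, Finset.sum_eq_single_of_mem d (by simp [hd])]
  · simp
  · intro d' hd' hne
    rw [Polynomial.coeff_C_mul_X_pow, if_neg]
    intro h1
    simp only [Finset.mem_filter] at hd'
    exact hne ((isBideg_of_mem_support hP hd'.1).ext (isBideg_of_mem_support hP hd) h1.symm hd'.2)

lemma topPoly_ne_zero {η : ℕ} {δT : ℤ} {δX : ℕ} {P : MvPolynomial (Fin 4) F}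
    (hP : P ∈ RSpan F η δT δX) {d : Fin 4 →₀ ℕ} (hd : d ∈ P.support) : topPoly P (d 3) ≠ 0 :=
  fun h => mem_support_iff.1 hd (by rw [← coeff_topPoly hP hd, h, Polynomial.coeff_zero])

lemma hirzebruch_bound_le_mul {η q δ e δX D G : ℕ} (hη : 2 ≤ η) (hδ : δ < q) (hD : D + η * e = δ)
    (he : e ≤ δX) (hG : q + 1 ≤ G + D) :
    ((q : ℤ) + if δX = 0 then 1 else 0) * (q - δ + 1) ≤
      G * ((q : ℤ) + (if e = δX then 1 else 0) - e) := by
  have hG' : (q : ℤ) + 1 - δ + η * e ≤ G := by zify at hD hG; linarith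
  have hηe : 2 * (e : ℤ) ≤ δ := by zify at hη hD; nlinarith
  have hη' : (2 : ℤ) ≤ η := by exact_mod_cast hη
  have hδ' : (δ : ℤ) < q := by exact_mod_cast hδ
  have he0 : (0 : ℤ) ≤ e := by positivity
  split_ifs with h0 h1 h1
  · subst h1; simp only [h0, CharP.cast_eq_zero, mul_zero, add_zero] at hG' ⊢
    nlinarith
  · omega
  · have : (e : ℤ) < q := by linarith
    nlinarith [mul_nonneg he0 (mul_nonneg (sub_nonneg.2 hη') (sub_nonneg.2 this.le))]
  · have : (e : ℤ) < q := by linarith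
    nlinarith [mul_nonneg he0 (mul_nonneg (sub_nonneg.2 hη') (sub_nonneg.2 this.le))]

lemma le_wt_ev [Fintype F] {η : ℕ} {δT : ℤ} {δX δ : ℕ} (hη : 2 ≤ η) (hδ : (δ : ℤ) = δT + η * δX)
    (hq : δ < Fintype.card F) {P : MvPolynomial (Fin 4) F} (hP : P ∈ RSpan F η δT δX)
    (hP0 : P ≠ 0) :
    ((Fintype.card F : ℤ) + if δX = 0 then 1 else 0) * (Fintype.card F - δ + 1) ≤
      wt F (ev F P) := by
  set q := Fintype.card F
  obtain ⟨d, hd, hmax⟩ := P.support.exists_max_image (· 3) (support_nonempty.2 hP0)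
  have hδe : d 0 + d 1 + η * d 3 = δ := by
    have := (isBideg_of_mem_support hP hd).add_add_mul_eq
    omega
  have hTop : ∀ d' ∈ P.support, d' 3 = d 3 → d' 0 + d' 1 = d 0 + d 1 := fun d' hd' he => by
    have := (isBideg_of_mem_support hP hd').add_add_mul_eq
    rw [he] at this
    omega
  set e := d 3
  set G := ({t | homogEval (topPoly P e) (d 0 + d 1) t ≠ 0} : Finset (Option F))
  have hG : q + 1 ≤ #G + (d 0 + d 1) := by
    simpa using card_add_le_card_homogEval_ne_zero_add (topPoly_ne_zero hP hd)
      (natDegree_topPoly_le hTop) (D := d 0 + d 1)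
  have hfiber : ∀ t ∈ G,
      q + (if e = δX then 1 else 0) ≤ #{s | ev F P (pointEquiv (t, s)) ≠ 0} + e := by
    intro t ht
    have hne : fiberPoly P t ≠ 0 := fun h0 => (Finset.mem_filter.1 ht).2 <| by
      rw [← coeff_fiberPoly_eq_homogEval hTop, h0, Polynomial.coeff_zero]
    simpa only [ev_pointEquiv_eq_homogEval (fun d' hd' => (isBideg_of_mem_support hP hd').2)]
      using card_add_le_card_homogEval_ne_zero_add hne (natDegree_fiberPoly_le hmax t) (D := δX)
  calc ((q : ℤ) + if δX = 0 then 1 else 0) * (q - δ + 1)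
      ≤ #G * ((q : ℤ) + (if e = δX then 1 else 0) - e) :=
        hirzebruch_bound_le_mul hη hq hδe ?_ hG
    _ = ∑ t ∈ G, ((q : ℤ) + (if e = δX then 1 else 0) - e) := by
        rw [Finset.sum_const, nsmul_eq_mul]
    _ ≤ ∑ t ∈ G, (#{s | ev F P (pointEquiv (t, s)) ≠ 0} : ℤ) :=
        Finset.sum_le_sum fun t ht => by have := hfiber t ht; split_ifs at this ⊢ <;> omega
    _ ≤ ∑ t, (#{s | ev F P (pointEquiv (t, s)) ≠ 0} : ℤ) :=
        Finset.sum_le_sum_of_subset_of_nonneg G.subset_univ fun _ _ _ => by positivity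
    _ = wt F (ev F P) := by rw [wt_eq_sum_card_fiber]; push_cast; rfl
  · exact (isBideg_of_mem_support hP hd).2 ▸ Nat.le_add_left _ _

lemma card_mul_ne_zero {α β M : Type*} [Fintype α] [Fintype β] [MulZeroClass M]
    [NoZeroDivisors M] (f : α → M) (g : β → M) :
    #{x : α × β | f x.1 * g x.2 ≠ 0} = #{a | f a ≠ 0} * #{b | g b ≠ 0} := by
  rw [← Finset.card_product, ← Finset.filter_product, Finset.univ_product_univ]
  simp only [mul_ne_zero_iff]

/-- `X₁ ^ δX · ∏_{e ∈ E} (T₂ - e T₁)`: it vanishes exactly on the fibres over `E` and, when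
`δX > 0`, on the section `X₁ = 0`. -/
noncomputable def minWeightPoly (δX : ℕ) (E : Finset F) : MvPolynomial (Fin 4) F :=
  X 2 ^ δX * ∏ e ∈ E, (X 1 - C e * X 0)

lemma minWeightPoly_mem_RSpan {η : ℕ} {δT : ℤ} {δX : ℕ} {E : Finset F}
    (hE : (#E : ℤ) = δT + η * δX) : minWeightPoly δX E ∈ RSpan F η δT δX := by
  rw [mem_RSpan_iff, minWeightPoly]
  have hX : ∀ i, IsWeightedHomogeneous (bidegWeight η) (X i : MvPolynomial (Fin 4) F)
      (bidegWeight η i) := isWeightedHomogeneous_X F _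
  have hfac : ∀ e ∈ E, IsWeightedHomogeneous (bidegWeight η) (X 1 - C e * X 0) (1, 0) :=
    fun e _ => (hX 1).sub ((hX 0).C_mul e)
  convert ((hX 2).pow δX).mul (IsWeightedHomogeneous.prod E _ _ hfac) using 1
  simp only [bidegWeight, Finset.sum_const, Prod.ext_iff, Matrix.cons_val, Prod.fst_add,
    Prod.snd_add, Prod.smul_fst, Prod.smul_snd]
  simp only [nsmul_eq_mul, mul_one, mul_zero]
  constructor <;> linarith

lemma ev_minWeightPoly (δX : ℕ) (E : Finset F) (x : Option F × Option F) :
    ev F (minWeightPoly δX E) (pointEquiv x) =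
      (∏ e ∈ E, ((p1Coords x.1).2 - e * (p1Coords x.1).1)) * (p1Coords x.2).1 ^ δX := by
  obtain ⟨t, s⟩ := x
  simp [ev, minWeightPoly, pt_pointEquiv, mul_comm]

lemma wt_ev_minWeightPoly [Fintype F] (δX : ℕ) {E : Finset F} (hE : #E ≤ Fintype.card F) :
    (wt F (ev F (minWeightPoly δX E)) : ℤ) =
      ((Fintype.card F : ℤ) + if δX = 0 then 1 else 0) * (Fintype.card F - #E + 1) := by
  have hT : #{t : Option F | ∏ e ∈ E, ((p1Coords t).2 - e * (p1Coords t).1) ≠ 0} =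
      Fintype.card F - #E + 1 := by
    rw [Finset.card_filter, Fintype.sum_option, ← Finset.card_filter]
    simp [p1Coords, Finset.prod_ne_zero_iff, sub_ne_zero, Finset.filter_notMem_eq_sdiff,
      Finset.card_sdiff_of_subset, add_comm]
  have hX : #{s : Option F | (p1Coords s).1 ^ δX ≠ 0} =
      Fintype.card F + if δX = 0 then 1 else 0 := by
    rw [Finset.card_filter, Fintype.sum_option]
    simp [p1Coords, add_comm]
  rw [wt_eq_card]
  simp only [ev_minWeightPoly]
  rw [card_mul_ne_zero (fun t => ∏ e ∈ E, ((p1Coords t).2 - e * (p1Coords t).1))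
    (fun s => (p1Coords s).1 ^ δX), hT, hX]
  push_cast [hE]
  ring

end

variable (F : Type) [Field F] [Fintype F]

/-- for `η ≥ 2` and `q > δ`, `d_η(δT,δX) = (q + [δX = 0])·(q−δ+1)`. -/
theorem statement15 (η : ℕ) (δT : ℤ) (δX : ℕ) (hη : 2 ≤ η)
    (hδ : 0 ≤ δT + (η : ℤ) * (δX : ℤ))
    (hq : δT + (η : ℤ) * (δX : ℤ) < (Fintype.card F : ℤ)) :
    (dmin F η δT δX : ℤ) =
      ((Fintype.card F : ℤ) + (if δX = 0 then 1 else 0)) *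
        ((Fintype.card F : ℤ) - (δT + (η : ℤ) * (δX : ℤ)) + 1) := by
  obtain ⟨δ, hδ⟩ := Int.eq_ofNat_of_zero_le hδ
  rw [hδ] at hq ⊢
  have hδq : δ < Fintype.card F := by exact_mod_cast hq
  obtain ⟨E, -, hE⟩ := Finset.exists_subset_card_eq (s := (Finset.univ : Finset F)) (n := δ)
    (by rw [Finset.card_univ]; omega)
  have hmem : wt F (ev F (minWeightPoly δX E)) ∈
      {w | ∃ v ∈ Code F η δT δX, v ≠ 0 ∧ wt F v = w} := by
    refine ⟨_, mem_Code_iff.2 ⟨_, minWeightPoly_mem_RSpan (by rw [hE, hδ]), rfl⟩, fun h => ?_, rfl⟩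
    simpa [ev_minWeightPoly, p1Coords] using congrFun h (pointEquiv (none, some 0))
  obtain ⟨v, hv, hv0, hwt⟩ := Nat.sInf_mem ⟨_, hmem⟩
  obtain ⟨P, hP, rfl⟩ := mem_Code_iff.1 hv
  refine le_antisymm ?_ ?_
  · rw [← hE, ← wt_ev_minWeightPoly δX (by omega)]
    exact_mod_cast Nat.sInf_le hmem
  · rw [dmin, ← hwt]
    exact le_wt_ev hη hδ.symm hδq hP fun h => hv0 (by subst h; funext i; simp [ev])

end Hirz
end
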